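/- arXiv:2501.15834 — 6 statements merged into one kernel-verified Lean document; each statement's English description precedes it below -/
import Mathlib

section
/- Let H be a housing market over a finite agent set N with strict partial order preferences ≻_a for each agent a. Let X be an allocation (a permutation-like set of arcs assigning each agent exactly one house among its acceptable ones) in the strong core of H, and let S be a peak set of X, i.e., an absorbing strongly connected component of the digraph whose arcs (a,b) satisfy b ⪰_a X(a). Then for every s ∈ S, the arc (s, X(s)) is undominated (no agent b with b ≻_s X(s) is acceptable to s), and X(s) ∈ S; moreover, every arc (a,b) of the underlying graph with a ∈ S and b ∉ S is dominated by the arc (a, X(a)), i.e., X(a) ≻_a b. -/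
/-- A housing market: each agent `a` has a strict partial order `pref a`
(`pref a b c` means agent `a` strictly prefers house `b` to house `c`). -/
structure Market (N : Type) where
  pref : N → N → N → Prop
  irrefl : ∀ a b, ¬ pref a b b
  asymm : ∀ a b c, pref a b c → ¬ pref a c b
  trans : ∀ a b c d, pref a b c → pref a c d → pref a b d

namespace Market

variable {N : Type}

/-- `b` is acceptable to `a`: `b ⪰_a a`, i.e. not `a ≻_a b`. -/
def acceptable (H : Market N) (a b : N) : Prop := ¬ H.pref a a b

/-- Arcs of the underlying digraph `D^H`. -/
def E (H : Market N) : Set (N × N) := {e | H.acceptable e.1 e.2}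

/-- Undominated arcs of `D^H`. -/
def undominated (H : Market N) : Set (N × N) :=
  {e | e ∈ H.E ∧ ∀ b', H.acceptable e.1 b' → ¬ H.pref e.1 b' e.2}

/-- A full allocation, given as a function assigning each agent its house. -/
def IsAllocation (H : Market N) (X : N → N) : Prop :=
  Function.Bijective X ∧ ∀ a, H.acceptable a (X a)

/-- A cycle of length `k ≥ 1` with all arcs in the arc set `A`. -/
def IsCycleIn (A : Set (N × N)) (k : ℕ) (c : ZMod k → N) : Prop :=
  0 < k ∧ Function.Injective c ∧ ∀ i, (c i, c (i + 1)) ∈ A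

/-- `E_{[⪰X]}`: arcs `(a,b)` with `b ⪰_a X(a)`. -/
def weakImprove (H : Market N) (X : N → N) : Set (N × N) :=
  {e | e ∈ H.E ∧ ¬ H.pref e.1 (X e.1) e.2}

/-- `E_{[≻X]}`: arcs `(a,b)` with `b ≻_a X(a)`. -/
def strictImprove (H : Market N) (X : N → N) : Set (N × N) :=
  {e | e ∈ H.E ∧ H.pref e.1 e.2 (X e.1)}

/-- A (weakly) blocking cycle for `X`. -/
def Blocks (H : Market N) (X : N → N) (k : ℕ) (c : ZMod k → N) : Prop :=
  IsCycleIn H.E k c ∧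
  (∀ i, ¬ H.pref (c i) (X (c i)) (c (i + 1))) ∧
  (∃ i, H.pref (c i) (c (i + 1)) (X (c i)))

/-- The strong core: allocations admitting no blocking cycle. -/
def InStrongCore (H : Market N) (X : N → N) : Prop :=
  H.IsAllocation X ∧ ¬ ∃ k c, H.Blocks X k c

/-- A strictly blocking cycle for `X`. -/
def StrictBlocks (H : Market N) (X : N → N) (k : ℕ) (c : ZMod k → N) : Prop :=
  IsCycleIn H.E k c ∧ ∀ i, H.pref (c i) (c (i + 1)) (X (c i))

/-- The core: allocations admitting no strictly blocking cycle. -/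
def InCore (H : Market N) (X : N → N) : Prop :=
  H.IsAllocation X ∧ ¬ ∃ k c, H.StrictBlocks X k c

/-- An allocation of the submarket `H|_S`, given as a set of arcs among agents of `S`. -/
def IsAllocationOn (H : Market N) (S : Set N) (X : Set (N × N)) : Prop :=
  X ⊆ H.E ∧ (∀ e ∈ X, e.1 ∈ S ∧ e.2 ∈ S) ∧
  (∀ a ∈ S, ∃! b, (a, b) ∈ X) ∧ (∀ b ∈ S, ∃! a, (a, b) ∈ X)

/-- A blocking cycle for the arc set `X` within the submarket `H|_S`. -/
def BlocksOn (H : Market N) (S : Set N) (X : Set (N × N)) (k : ℕ) (c : ZMod k → N) : Prop :=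
  IsCycleIn H.E k c ∧ (∀ i, c i ∈ S) ∧
  (∀ i b, (c i, b) ∈ X → ¬ H.pref (c i) b (c (i + 1))) ∧
  (∃ i b, (c i, b) ∈ X ∧ H.pref (c i) (c (i + 1)) b)

/-- Membership in the strong core of the submarket `H|_S`. -/
def InStrongCoreOn (H : Market N) (S : Set N) (X : Set (N × N)) : Prop :=
  H.IsAllocationOn S X ∧ ¬ ∃ k c, H.BlocksOn S X k c

end Market

/-- The arcs of the allocation `X` whose tails lie in `S`. -/
def graphRestrict {N : Type} (X : N → N) (S : Set N) : Set (N × N) :=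
  {e | e.1 ∈ S ∧ e.2 = X e.1}

/-- Reachability in the digraph given by arc set `A`. -/
def reach {N : Type} (A : Set (N × N)) : N → N → Prop :=
  Relation.ReflTransGen (fun u v => (u, v) ∈ A)

/-- A strongly connected component of the digraph given by arc set `A`. -/
def IsSCC {N : Type} (A : Set (N × N)) (S : Set N) : Prop :=
  S.Nonempty ∧ (∀ u ∈ S, ∀ v ∈ S, reach A u v) ∧
  (∀ u ∈ S, ∀ v, reach A u v → reach A v u → v ∈ S)

/-- An absorbing set: a strongly connected component not left by any arc. -/
def IsAbsorbing {N : Type} (A : Set (N × N)) (S : Set N) : Prop :=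
  IsSCC A S ∧ ∀ e ∈ A, e.1 ∈ S → e.2 ∈ S

/-!
If some agent `s` of a peak set `S` had an acceptable house `b` with `b ≻_s X(s)`, then `b` would
lie in `S` (since `b ⪰_s X(s)` and `S` is absorbing) and so would reach `s` in `D_{[⪰X]}`. Shortening
that walk to a path and closing it with the arc `(s, b)` gives a cycle on which every agent weakly
improves and `s` strictly improves, contradicting that `X` is in the strong core. The remaining
claims only use that no arc of `D_{[⪰X]}` leaves `S`.
-/

theorem List.exists_nodup_isChain_cons_of_relationReflTransGen {α : Type*} {r : α → α → Prop}
    {a b : α} (h : Relation.ReflTransGen r a b) :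
    ∃ l, IsChain r (a :: l) ∧ getLast (a :: l) (cons_ne_nil _ _) = b ∧ (a :: l).Nodup := by
  refine Relation.ReflTransGen.head_induction_on h ⟨[], .singleton _, rfl, nodup_singleton _⟩ ?_
  intro a c hac _ ⟨l, hchain, hlast, hnodup⟩
  by_cases ha : a ∈ c :: l
  · obtain ⟨p, q, hpq⟩ := append_of_mem ha
    have hinfix : a :: q <:+: c :: l := hpq ▸ (suffix_append p (a :: q)).isInfix
    refine ⟨q, hchain.infix hinfix, ?_, hnodup.sublist hinfix.sublist⟩
    rw [← hlast]
    simp only [hpq, getLast_append_of_ne_nil _ (cons_ne_nil a q)]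
  · exact ⟨c :: l, hchain.cons_cons hac, by rwa [getLast_cons_cons], nodup_cons.2 ⟨ha, hnodup⟩⟩

namespace Market

variable {N : Type}

theorem IsCycleIn.mono {A B : Set (N × N)} {k : ℕ} {c : ZMod k → N} (hc : IsCycleIn A k c)
    (hAB : A ⊆ B) : IsCycleIn B k c :=
  ⟨hc.1, hc.2.1, fun i => hAB (hc.2.2 i)⟩

theorem exists_isCycleIn_of_mem_of_reach {A : Set (N × N)} {a b : N} (hab : (a, b) ∈ A)
    (hba : reach A b a) : ∃ k c, IsCycleIn A k c ∧ ∃ i, c i = a ∧ c (i + 1) = b := by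
  obtain ⟨l, hchain, hlast, hnodup⟩ := List.exists_nodup_isChain_cons_of_relationReflTransGen hba
  -- `Fin (n + 1)` is definitionally `ZMod (n + 1)`, so `c` can serve as a cycle indexed by `ZMod`.
  let c : Fin (l.length + 1) → N := fun i => (b :: l)[i.val]
  have hc_last : c (Fin.last _) = a := by
    rw [← hlast, List.getLast_eq_getElem]
    rfl
  have hc_first : c (Fin.last _ + 1) = b := by
    rw [Fin.last_add_one]
    rfl
  have hc_inj : Function.Injective c := fun i j hij =>
    Fin.ext ((List.Nodup.getElem_inj_iff hnodup).1 hij)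
  have hc_arc : ∀ i, (c i, c (i + 1)) ∈ A := by
    intro i
    by_cases hi : i = Fin.last _
    · rw [hi, hc_first, hc_last]
      exact hab
    · have hi' : i.val + 1 < l.length + 1 := by
        simpa [Fin.val_add_one, hi] using (i + 1).isLt
      simpa [c, Fin.val_add_one, hi] using List.isChain_iff_getElem.1 hchain i.val hi'
  exact ⟨l.length + 1, c, ⟨l.length.succ_pos, hc_inj, hc_arc⟩, Fin.last _, hc_last, hc_first⟩

variable (H : Market N) (X : N → N)

theorem strictImprove_subset_weakImprove : H.strictImprove X ⊆ H.weakImprove X :=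
  fun _ he => ⟨he.1, H.asymm _ _ _ he.2⟩

variable {H X}

theorem InStrongCore.not_reach_of_mem_strictImprove (hX : H.InStrongCore X) {a b : N}
    (hab : (a, b) ∈ H.strictImprove X) : ¬ reach (H.weakImprove X) b a := by
  intro hba
  obtain ⟨k, c, hc, i, hci, hci'⟩ :=
    exists_isCycleIn_of_mem_of_reach (H.strictImprove_subset_weakImprove X hab) hba
  refine hX.2 ⟨k, c, hc.mono fun _ he => he.1, fun j => (hc.2.2 j).2, i, ?_⟩
  rw [hci, hci']
  exact hab.2

end Market

theorem stmt1_general {N : Type} (H : Market N) (X : N → N)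
    (hX : H.InStrongCore X) (S : Set N)
    (hS : IsAbsorbing (H.weakImprove X) S) :
    (∀ s ∈ S, (s, X s) ∈ H.undominated ∧ X s ∈ S) ∧
    (∀ a ∈ S, ∀ b, b ∉ S → (a, b) ∈ H.E → H.pref a (X a) b) := by
  obtain ⟨⟨-, hS_reach, -⟩, hS_closed⟩ := hS
  have hS_closed' : ∀ a ∈ S, ∀ b, (a, b) ∈ H.weakImprove X → b ∈ S :=
    fun a ha b hab => hS_closed (a, b) hab ha
  refine ⟨fun s hs => ⟨⟨hX.1.2 s, fun b hb hpref => ?_⟩, ?_⟩, fun a ha b hb hab => ?_⟩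
  · have hsb : (s, b) ∈ H.strictImprove X := ⟨hb, hpref⟩
    have hbS : b ∈ S := hS_closed' s hs b (H.strictImprove_subset_weakImprove X hsb)
    exact hX.not_reach_of_mem_strictImprove hsb (hS_reach b hbS s hs)
  · exact hS_closed' s hs (X s) ⟨hX.1.2 s, H.irrefl s (X s)⟩
  · by_contra hpref
    exact hb (hS_closed' a ha b ⟨hab, hpref⟩)

theorem stmt1 {N : Type} [Fintype N] (H : Market N) (X : N → N)
    (hX : H.InStrongCore X) (S : Set N)
    (hS : IsAbsorbing (H.weakImprove X) S) :
    (∀ s ∈ S, (s, X s) ∈ H.undominated ∧ X s ∈ S) ∧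
    (∀ a ∈ S, ∀ b, b ∉ S → (a, b) ∈ H.E → H.pref a (X a) b) :=
  stmt1_general H X hX S hS
end

section
/- (Characterization of the strong core via peak sets, sufficiency direction.) Let H be a housing market with strict partial order preferences, U the set of undominated arcs in the underlying digraph D^H, and X an allocation that partitions as X = X₁ ∪ X₂ for some agent set S ⊆ N such that: (a) X₁ is an allocation in the restricted market H|_S contained in U; (b) X₂ is an allocation in the strong core of H|_{N∖S}; and (c) every arc of D^H leaving S is dominated by some arc of X₁. Then X is in the strong core of H. -/
theorem stmt2 {N : Type} [Fintype N] (H : Market N) (X : N → N)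
    (hX : H.IsAllocation X) (S : Set N)
    (h1 : H.IsAllocationOn S (graphRestrict X S) ∧ graphRestrict X S ⊆ H.undominated)
    (h2 : H.InStrongCoreOn Sᶜ (graphRestrict X Sᶜ))
    (h3 : ∀ a ∈ S, ∀ b, b ∉ S → (a, b) ∈ H.E →
      ∃ e ∈ graphRestrict X S, e.1 = a ∧ H.pref a e.2 b) :
    H.InStrongCore X := by
  refine ⟨hX, ?_⟩
  rintro ⟨k, c, hcyc, hweak, i₀, hstrict⟩
  have hk : 0 < k := hcyc.1
  have : NeZero k := ⟨hk.ne'⟩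
  -- if a cycle vertex is in S, its successor is in S
  have hstep : ∀ i, c i ∈ S → c (i + 1) ∈ S := by
    intro i hi
    by_contra hnot
    obtain ⟨e, he, he1, hpref⟩ := h3 (c i) hi (c (i + 1)) hnot (hcyc.2.2 i)
    have he2 : e.2 = X (c i) := by rw [he.2, he1]
    rw [he2] at hpref
    exact hweak i hpref
  -- either all vertices in S or all in Sᶜ
  rcases Classical.em (∃ i, c i ∈ S) with ⟨j₀, hj₀⟩ | hno
  · -- all in S
    have hall : ∀ i, c i ∈ S := by
      have key : ∀ n : ℕ, c (j₀ + (n : ZMod k)) ∈ S := by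
        intro n
        induction n with
        | zero => simpa using hj₀
        | succ m ih =>
          have : ((m + 1 : ℕ) : ZMod k) = (m : ZMod k) + 1 := by push_cast; ring
          rw [this, ← add_assoc]
          exact hstep _ ih
      intro i
      obtain ⟨n, hn⟩ : ∃ n : ℕ, (n : ZMod k) = i - j₀ := ⟨(i - j₀).val, ZMod.natCast_rightInverse _⟩
      have : i = j₀ + (n : ZMod k) := by rw [hn]; ring
      rw [this]; exact key n
    -- (c i₀, X (c i₀)) is undominated, contradiction with hstrict
    have hmem : (c i₀, X (c i₀)) ∈ graphRestrict X S := ⟨hall i₀, rfl⟩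
    have hund := h1.2 hmem
    exact hund.2 (c (i₀ + 1)) (hcyc.2.2 i₀) hstrict
  · -- all in Sᶜ
    push_neg at hno
    exact h2.2 ⟨k, c, hcyc, hno, fun i b hb => by
        have : b = X (c i) := hb.2
        rw [this]; exact hweak i,
      ⟨i₀, X (c i₀), ⟨hno i₀, rfl⟩, hstrict⟩⟩
end

section
/- (Characterization of the strong core via peak sets, necessity direction.) Let H be a housing market with strict partial order preferences and X an allocation in the strong core of H. Let S be a peak set of X (an absorbing set of the digraph with arcs {(a,b) : b ⪰_a X(a)}). Then X₁ = X ∩ (S × S) is an allocation of H|_S consisting only of undominated arcs, X₂ = X ∖ X₁ is an allocation in the strong core of H|_{N∖S}, and every arc of D^H leaving S is dominated by an arc of X₁. -/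
/-!
Every arc `(a, X a)` lies in `D_{[⪰X]}`, so `X` maps the absorbing set `S` into itself and, being
injective on a finite set, permutes both `S` and `Sᶜ`. On an `X`-invariant set of agents a
blocking cycle of the restricted allocation blocks `X` itself; this gives the strong core on `Sᶜ`.
If `b ≻_a X(a)` for some `a ∈ S`, then `(a, b)` is an arc of `D_{[⪰X]}`, so `b ∈ S`, and strong
connectivity yields a simple `D_{[⪰X]}`-path from `b` back to `a` which the strict arc `(a, b)`
closes into a blocking cycle. Finally, an arc leaving `S` is not in `D_{[⪰X]}`, i.e. it is
dominated by the arc `(a, X a)`.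
-/

namespace Relation

variable {α : Type*} {r : α → α → Prop}

theorem ReflTransGen.exists_nodup_isChain_cons {a b : α} (h : ReflTransGen r a b) :
    ∃ l, List.IsChain r (a :: l) ∧ (a :: l).Nodup ∧
      (a :: l).getLast (List.cons_ne_nil _ _) = b := by
  induction h using ReflTransGen.head_induction_on with
  | refl => exact ⟨[], List.IsChain.singleton _, List.nodup_singleton _, rfl⟩
  | @head a c hac _ ih =>
    obtain ⟨l, hchain, hnodup, hlast⟩ := ih
    by_cases ha : a ∈ c :: l
    · obtain ⟨l₁, l₂, hsplit⟩ := List.append_of_mem ha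
      rw [hsplit] at hchain hnodup
      refine ⟨l₂, hchain.right_of_append, hnodup.sublist (List.sublist_append_right _ _), ?_⟩
      rw [← hlast, List.getLast_congr _ (by simp) hsplit, List.getLast_append_of_ne_nil]
    · exact ⟨c :: l, List.IsChain.cons_cons hac hchain, List.nodup_cons.2 ⟨ha, hnodup⟩,
        by rwa [List.getLast_cons]⟩

theorem ReflTransGen.exists_injective_cycle {u v : α} (h : ReflTransGen r u v) :
    ∃ (k : ℕ) (c : ZMod k → α), 0 < k ∧ Function.Injective c ∧ c 0 = u ∧ c (-1) = v ∧
      ∀ i, i ≠ -1 → r (c i) (c (i + 1)) := by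
  obtain ⟨l, hchain, hnodup, hlast⟩ := h.exists_nodup_isChain_cons
  have hval : ∀ i : ZMod (l.length + 1), i.val < (u :: l).length := ZMod.val_lt
  refine ⟨l.length + 1, fun i => (u :: l)[i.val]'(hval i), l.length.succ_pos, ?_, rfl, ?_, ?_⟩
  · intro i j hij
    exact ZMod.val_injective _ ((hnodup.getElem_inj_iff).1 hij)
  · simp [ZMod.val_neg_one, ← hlast, List.getLast_eq_getElem]
  · intro i hi
    have hlt : i.val + 1 < l.length + 1 := by
      have := ZMod.val_lt i
      have : i.val ≠ l.length :=
        fun h => hi (ZMod.val_injective _ (h.trans (ZMod.val_neg_one _).symm))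
      omega
    have : Fact (1 < l.length + 1) := ⟨by omega⟩
    have hsucc : (i + 1).val = i.val + 1 := by
      rw [ZMod.val_add, ZMod.val_one, Nat.mod_eq_of_lt hlt]
    simp only [hsucc]
    exact List.isChain_iff_getElem.1 hchain _ (by simpa using hlt)

end Relation

namespace Market

open Set

variable {N : Type} {H : Market N} {X : N → N}

theorem IsAllocation.mem_weakImprove (hX : H.IsAllocation X) (a : N) :
    (a, X a) ∈ H.weakImprove X :=
  ⟨hX.2 a, H.irrefl a (X a)⟩

theorem IsAllocation.isAllocationOn_graphRestrict (hX : H.IsAllocation X) {T : Set N}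
    (hT : BijOn X T T) : H.IsAllocationOn T (graphRestrict X T) := by
  refine ⟨?_, ?_, fun a ha => ⟨X a, ⟨ha, rfl⟩, fun b hb => hb.2⟩, fun b hb => ?_⟩
  · rintro ⟨a, b⟩ ⟨-, (rfl : b = X a)⟩
    exact hX.2 a
  · rintro ⟨a, b⟩ ⟨ha, (rfl : b = X a)⟩
    exact ⟨ha, hT.mapsTo ha⟩
  · obtain ⟨a, ha, rfl⟩ := hT.surjOn hb
    exact ⟨a, ⟨ha, rfl⟩, fun a' ha' => hX.1.1 ha'.2.symm⟩

theorem IsAllocation.bijOn_of_isAbsorbing [Finite N] (hX : H.IsAllocation X) {S : Set N}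
    (hS : IsAbsorbing (H.weakImprove X) S) : BijOn X S S :=
  (S.toFinite.injOn_iff_bijOn_of_mapsTo fun a ha => hS.2 _ (hX.mem_weakImprove a) ha).1
    hX.1.1.injOn

theorem InStrongCore.inStrongCoreOn_graphRestrict (hX : H.InStrongCore X) {T : Set N}
    (hT : BijOn X T T) : H.InStrongCoreOn T (graphRestrict X T) := by
  refine ⟨hX.1.isAllocationOn_graphRestrict hT, ?_⟩
  rintro ⟨k, c, hcycle, hmem, hweak, i, b, ⟨-, (rfl : b = X (c i))⟩, hstrict⟩
  exact hX.2 ⟨k, c, hcycle, fun j => hweak j _ ⟨hmem j, rfl⟩, i, hstrict⟩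

theorem exists_blocks_of_reach {a b : N} (hab : (a, b) ∈ H.strictImprove X)
    (hba : reach (H.weakImprove X) b a) : ∃ k c, H.Blocks X k c := by
  obtain ⟨k, c, hk, hinj, hc0, hclast, harcs⟩ :=
    Relation.ReflTransGen.exists_injective_cycle hba
  have hclose : c (-1 + 1) = b := by rw [neg_add_cancel, hc0]
  have hweak : ∀ i, (c i, c (i + 1)) ∈ H.weakImprove X := by
    intro i
    by_cases hi : i = -1
    · subst hi
      rw [hclast, hclose]
      exact ⟨hab.1, H.asymm a b (X a) hab.2⟩
    · exact harcs i hi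
  refine ⟨k, c, ⟨hk, hinj, fun i => (hweak i).1⟩, fun i => (hweak i).2, -1, ?_⟩
  rw [hclast, hclose]
  exact hab.2

theorem InStrongCore.graphRestrict_subset_undominated (hX : H.InStrongCore X) {S : Set N}
    (hS : IsAbsorbing (H.weakImprove X) S) : graphRestrict X S ⊆ H.undominated := by
  rintro ⟨a, x⟩ ⟨ha, (rfl : x = X a)⟩
  refine ⟨hX.1.2 a, fun b (hb : (a, b) ∈ H.E) hpref =>
    hX.2 (exists_blocks_of_reach ⟨hb, hpref⟩ ?_)⟩
  have hbS : b ∈ S := hS.2 (a, b) ⟨hb, H.asymm a b (X a) hpref⟩ ha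
  exact hS.1.2.1 b hbS a ha

theorem pref_of_isAbsorbing {S : Set N} (hS : IsAbsorbing (H.weakImprove X) S) {a b : N}
    (ha : a ∈ S) (hb : b ∉ S) (hab : (a, b) ∈ H.E) : H.pref a (X a) b := by
  by_contra hpref
  exact hb (hS.2 (a, b) ⟨hab, hpref⟩ ha)

end Market

theorem stmt3 {N : Type} [Fintype N] (H : Market N) (X : N → N)
    (hX : H.InStrongCore X) (S : Set N)
    (hS : IsAbsorbing (H.weakImprove X) S) :
    (H.IsAllocationOn S (graphRestrict X S) ∧ graphRestrict X S ⊆ H.undominated) ∧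
    H.InStrongCoreOn Sᶜ (graphRestrict X Sᶜ) ∧
    (∀ a ∈ S, ∀ b, b ∉ S → (a, b) ∈ H.E →
      ∃ e ∈ graphRestrict X S, e.1 = a ∧ H.pref a e.2 b) := by
  have hS_bij : Set.BijOn X S S := hX.1.bijOn_of_isAbsorbing hS
  refine ⟨⟨hX.1.isAllocationOn_graphRestrict hS_bij, hX.graphRestrict_subset_undominated hS⟩,
    hX.inStrongCoreOn_graphRestrict (hS_bij.compl hX.1.1), ?_⟩
  intro a ha b hb hab
  exact ⟨(a, X a), ⟨ha, rfl⟩, rfl, Market.pref_of_isAbsorbing hS ha hb hab⟩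
end

section
/- Let H be a housing market with strict partial order preferences over finite agent set N, and let X and Y be two allocations both in the strong core of H. Then every agent finds X and Y incomparable or equal: for each a ∈ N, neither X(a) ≻_a Y(a) nor Y(a) ≻_a X(a). -/
namespace StrongCoreAux

variable {N : Type}

/-- The combined "choice" digraph: `u` points to `X u` when `Y u` is not strictly
better, and to `Y u` when `X u` is not strictly better. -/
def step (H : Market N) (X Y : N → N) (u w : N) : Prop :=
  (w = X u ∧ ¬ H.pref u (Y u) (X u)) ∨ (w = Y u ∧ ¬ H.pref u (X u) (Y u))

lemma step_total (H : Market N) (X Y : N → N) (u : N) : ∃ w, step H X Y u w := by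
  by_cases h : H.pref u (X u) (Y u)
  · exact ⟨X u, Or.inl ⟨rfl, H.asymm _ _ _ h⟩⟩
  · exact ⟨Y u, Or.inr ⟨rfl, h⟩⟩

lemma step_weakX (H : Market N) (X Y : N → N) {u w : N} (h : step H X Y u w) :
    ¬ H.pref u (X u) w := by
  rcases h with ⟨rfl, _⟩ | ⟨rfl, h⟩
  · exact H.irrefl _ _
  · exact h

lemma step_weakY (H : Market N) (X Y : N → N) {u w : N} (h : step H X Y u w) :
    ¬ H.pref u (Y u) w := by
  rcases h with ⟨rfl, h⟩ | ⟨rfl, _⟩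
  · exact h
  · exact H.irrefl _ _

/-- Walks of length `n` in the step digraph. -/
def stepn (H : Market N) (X Y : N → N) : ℕ → N → N → Prop
  | 0, u, w => u = w
  | (n+1), u, w => ∃ x, step H X Y u x ∧ stepn H X Y n x w

lemma stepn_snoc (H : Market N) (X Y : N → N) :
    ∀ {n : ℕ} {a b c : N}, stepn H X Y n a b → step H X Y b c → stepn H X Y (n+1) a c := by
  intro n
  induction n with
  | zero => intro a b c hab hbc; cases hab; exact ⟨c, hbc, rfl⟩
  | succ n ih =>
    rintro a b c ⟨x, hax, hxb⟩ hbc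
    exact ⟨x, hax, ih hxb hbc⟩

lemma stepn_of_rtg (H : Market N) (X Y : N → N) {a b : N}
    (h : Relation.ReflTransGen (step H X Y) a b) : ∃ n, stepn H X Y n a b := by
  induction h with
  | refl => exact ⟨0, rfl⟩
  | tail _ hbc ih => obtain ⟨n, hn⟩ := ih; exact ⟨n + 1, stepn_snoc H X Y hn hbc⟩

/-- From a loop through `v`, extract an injective `ZMod k` cycle through `v`. -/
lemma cycle_of_loop (H : Market N) (X Y : N → N) (v u₁ : N)
    (h1 : step H X Y v u₁) (h2 : Relation.ReflTransGen (step H X Y) u₁ v) :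
    ∃ (k : ℕ) (c : ZMod k → N), 0 < k ∧ Function.Injective c ∧ c 0 = v ∧
      ∀ i, step H X Y (c i) (c (i + 1)) := by
  classical
  set R : N → Prop := fun w => ∃ n, stepn H X Y n w v with hR
  have hRv : R v := ⟨0, rfl⟩
  have hRu : R u₁ := stepn_of_rtg H X Y h2
  set d : N → ℕ := fun w => if h : R w then Nat.find h else 0 with hd
  have d_spec : ∀ w, R w → stepn H X Y (d w) w v := by
    intro w h; simp only [hd, dif_pos h]; exact Nat.find_spec h
  have d_min : ∀ w (h : R w) (m : ℕ), stepn H X Y m w v → d w ≤ m := by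
    intro w h m hm; simp only [hd, dif_pos h]; exact Nat.find_min' h hm
  have hdv : d v = 0 := Nat.le_zero.mp (d_min v hRv 0 rfl)
  have d_zero : ∀ w, R w → d w = 0 → w = v := by
    intro w h h0
    have := d_spec w h
    rw [h0] at this; exact this
  have g_ex : ∀ w, R w → w ≠ v → ∃ u, step H X Y w u ∧ R u ∧ d u = d w - 1 := by
    intro w hw hne
    have hd0 : d w ≠ 0 := fun h0 => hne (d_zero w hw h0)
    obtain ⟨m, hm⟩ : ∃ m, d w = m + 1 := ⟨d w - 1, by omega⟩
    have hs := d_spec w hw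
    rw [hm] at hs
    obtain ⟨u, hwu, hu⟩ := hs
    have hRu' : R u := ⟨m, hu⟩
    have h1' : d u ≤ m := d_min u hRu' m hu
    have h2' : d w ≤ d u + 1 := d_min w hw _ ⟨u, hwu, d_spec u hRu'⟩
    exact ⟨u, hwu, hRu', by omega⟩
  set g : N → N := fun w => if h : R w ∧ w ≠ v then (g_ex w h.1 h.2).choose else u₁ with hg
  have gv : g v = u₁ := dif_neg (by simp)
  have g_spec : ∀ w, R w → w ≠ v →
      step H X Y w (g w) ∧ R (g w) ∧ d (g w) = d w - 1 := by
    intro w hw hne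
    have hcond : R w ∧ w ≠ v := ⟨hw, hne⟩
    simp only [hg, dif_pos hcond]
    exact (g_ex w hw hne).choose_spec
  set k : ℕ := d u₁ + 1 with hk
  have orbit : ∀ n, 1 ≤ n → n ≤ k → R (g^[n] v) ∧ d (g^[n] v) = k - n := by
    intro n
    induction n with
    | zero => omega
    | succ n ih =>
      intro _ hnk
      rcases Nat.eq_zero_or_pos n with hn0 | hn1
      · subst hn0
        simp only [zero_add, Function.iterate_one, gv]
        exact ⟨hRu, by omega⟩
      · have hn : n ≤ k := by omega
        obtain ⟨hRw, hdw⟩ := ih hn1 hn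
        have hdw1 : 1 ≤ d (g^[n] v) := by omega
        have hne : g^[n] v ≠ v := by
          intro h; rw [h, hdv] at hdw1; omega
        obtain ⟨_, hRg, hdg⟩ := g_spec _ hRw hne
        rw [Function.iterate_succ_apply']
        exact ⟨hRg, by omega⟩
  have hk_ret : g^[k] v = v := by
    obtain ⟨hR', hd'⟩ := orbit k (by omega) le_rfl
    exact d_zero _ hR' (by omega)
  haveI : NeZero k := ⟨by omega⟩
  refine ⟨k, fun i => g^[i.val] v, by omega, ?_, ?_, ?_⟩
  · intro i j hij
    have hi := ZMod.val_lt i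
    have hj := ZMod.val_lt j
    have key : ∀ a b : ZMod k, a.val = 0 → b.val ≠ 0 → g^[a.val] v ≠ g^[b.val] v := by
      intro a b ha hb heq
      rw [ha] at heq
      simp only [Function.iterate_zero, id_eq] at heq
      obtain ⟨hR', hd'⟩ := orbit b.val (by omega) (le_of_lt (ZMod.val_lt b))
      have : d v = k - b.val := by rw [heq]; exact hd'
      rw [hdv] at this
      have := ZMod.val_lt b
      omega
    rcases Nat.eq_zero_or_pos i.val with hi0 | hi1 <;>
      rcases Nat.eq_zero_or_pos j.val with hj0 | hj1
    · exact ZMod.val_injective k (by omega)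
    · exact absurd hij (key i j hi0 (by omega))
    · exact absurd hij.symm (key j i hj0 (by omega))
    · obtain ⟨_, hdi⟩ := orbit i.val (by omega) (le_of_lt hi)
      obtain ⟨_, hdj⟩ := orbit j.val (by omega) (le_of_lt hj)
      have : i.val = j.val := by
        have := congrArg d hij
        rw [hdi, hdj] at this
        omega
      exact ZMod.val_injective k this
  · simp
  · intro i
    show step H X Y (g^[i.val] v) (g^[(i+1).val] v)
    have hstep : step H X Y (g^[i.val] v) (g (g^[i.val] v)) := by
      rcases Nat.eq_zero_or_pos i.val with hi0 | hi1
      · rw [hi0]; simpa [gv] using h1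
      · obtain ⟨hRw, hdw⟩ := orbit i.val (by omega) (le_of_lt (ZMod.val_lt i))
        have hne : g^[i.val] v ≠ v := by
          intro h
          rw [h, hdv] at hdw
          have := ZMod.val_lt i
          omega
        exact (g_spec _ hRw hne).1
    have hval : (i + 1).val = (i.val + 1) % k := by
      rw [ZMod.val_add, ZMod.val_one_eq_one_mod, Nat.add_mod_mod]
    have hnext : g^[(i + 1).val] v = g (g^[i.val] v) := by
      rcases Nat.lt_or_ge (i.val + 1) k with hlt | hge
      · rw [hval, Nat.mod_eq_of_lt hlt, Function.iterate_succ_apply']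
      · have hival : i.val = k - 1 := by have := ZMod.val_lt i; omega
        have hmod : (i.val + 1) % k = 0 := by
          have h' : i.val + 1 = k := by omega
          simp [h']
        rw [hval, hmod]
        simp only [Function.iterate_zero, id_eq]
        calc v = g^[k] v := hk_ret.symm
        _ = g (g^[k-1] v) := by
            conv_lhs => rw [show k = (k-1)+1 by omega]
            rw [Function.iterate_succ_apply']
        _ = g (g^[i.val] v) := by rw [hival]
    rw [hnext]
    exact hstep

def improver (H : Market N) (X Y : N → N) (a : N) : Prop :=
  H.pref a (X a) (Y a) ∨ H.pref a (Y a) (X a)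

def stepClosed (H : Market N) (X Y : N → N) (T : Finset N) : Prop :=
  ∀ v ∈ T, ∀ w, step H X Y v w → w ∈ T

lemma exists_min_closed (H : Market N) (X Y : N → N) :
    ∀ S : Finset N, S.Nonempty → stepClosed H X Y S →
    ∃ T ⊆ S, T.Nonempty ∧ stepClosed H X Y T ∧
      ∀ T' ⊆ T, T'.Nonempty → stepClosed H X Y T' → T' = T := by
  classical
  intro S
  induction S using Finset.strongInductionOn with
  | _ S ih =>
    intro hne hcl
    by_cases h : ∃ T' ⊂ S, T'.Nonempty ∧ stepClosed H X Y T'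
    · obtain ⟨T', hsub, hne', hcl'⟩ := h
      obtain ⟨T, hT1, hT2, hT3, hT4⟩ := ih T' hsub hne' hcl'
      exact ⟨T, hT1.trans hsub.subset, hT2, hT3, hT4⟩
    · refine ⟨S, le_refl _, hne, hcl, ?_⟩
      intro T' hsub hne' hcl'
      by_contra hneq
      exact h ⟨T', lt_of_le_of_ne hsub hneq, hne', hcl'⟩

lemma min_connected (H : Market N) (X Y : N → N) (T : Finset N)
    (hcl : stepClosed H X Y T)
    (hmin : ∀ T' ⊆ T, T'.Nonempty → stepClosed H X Y T' → T' = T) :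
    ∀ v ∈ T, ∀ w ∈ T, Relation.TransGen (step H X Y) v w := by
  classical
  intro v hv
  set R : Finset N := T.filter (fun w => Relation.TransGen (step H X Y) v w) with hRdef
  have hRsub : R ⊆ T := Finset.filter_subset _ _
  have hRne : R.Nonempty := by
    obtain ⟨u, hu⟩ := step_total H X Y v
    exact ⟨u, Finset.mem_filter.mpr ⟨hcl v hv u hu, Relation.TransGen.single hu⟩⟩
  have hRcl : stepClosed H X Y R := by
    intro w hw w' hww'
    obtain ⟨hwT, hTG⟩ := Finset.mem_filter.mp hw
    exact Finset.mem_filter.mpr ⟨hcl w hwT w' hww', hTG.tail hww'⟩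
  have hRT : R = T := hmin R hRsub hRne hRcl
  intro w hw
  rw [← hRT] at hw
  exact (Finset.mem_filter.mp hw).2

lemma exists_improver_on_cycle (H : Market N) (X Y : N → N)
    (hXinj : Function.Injective X) (hYinj : Function.Injective Y) :
    ∀ S : Finset N, (∀ v ∈ S, X v ∈ S ∧ Y v ∈ S) →
    ∀ b ∈ S, improver H X Y b →
    ∃ v, improver H X Y v ∧ Relation.TransGen (step H X Y) v v := by
  classical
  intro S
  induction S using Finset.strongInductionOn with
  | _ S ih =>
    intro hclS b hb hbimp
    have hScl : stepClosed H X Y S := by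
      intro v hv w hw
      rcases hw with ⟨rfl, _⟩ | ⟨rfl, _⟩
      · exact (hclS v hv).1
      · exact (hclS v hv).2
    obtain ⟨T, hTS, hTne, hTcl, hTmin⟩ :=
      exists_min_closed H X Y S ⟨b, hb⟩ hScl
    by_cases himp : ∃ v ∈ T, improver H X Y v
    · obtain ⟨v, hvT, hvimp⟩ := himp
      exact ⟨v, hvimp, min_connected H X Y T hTcl hTmin v hvT v hvT⟩
    · push_neg at himp
      -- T consists of non-improvers; it is closed under X and Y
      have hTXY : ∀ v ∈ T, X v ∈ T ∧ Y v ∈ T := by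
        intro v hv
        have h1 : ¬ H.pref v (Y v) (X v) := fun h => himp v hv (Or.inr h)
        have h2 : ¬ H.pref v (X v) (Y v) := fun h => himp v hv (Or.inl h)
        exact ⟨hTcl v hv _ (Or.inl ⟨rfl, h1⟩), hTcl v hv _ (Or.inr ⟨rfl, h2⟩)⟩
      have hTX : T.image X = T := by
        apply Finset.eq_of_subset_of_card_le
        · intro w hw
          obtain ⟨t, ht, rfl⟩ := Finset.mem_image.mp hw
          exact (hTXY t ht).1
        · rw [Finset.card_image_of_injective _ hXinj]
      have hTY : T.image Y = T := by
        apply Finset.eq_of_subset_of_card_le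
        · intro w hw
          obtain ⟨t, ht, rfl⟩ := Finset.mem_image.mp hw
          exact (hTXY t ht).2
        · rw [Finset.card_image_of_injective _ hYinj]
      set S' : Finset N := S \ T with hS'
      have hbT : b ∉ T := fun h => himp b h hbimp
      have hbS' : b ∈ S' := Finset.mem_sdiff.mpr ⟨hb, hbT⟩
      have hS'sub : S' ⊂ S := by
        obtain ⟨t, ht⟩ := hTne
        refine Finset.ssubset_iff_of_subset (Finset.sdiff_subset) |>.mpr ?_
        exact ⟨t, hTS ht, fun h => (Finset.mem_sdiff.mp h).2 ht⟩
      have hclS' : ∀ v ∈ S', X v ∈ S' ∧ Y v ∈ S' := by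
        intro v hv
        obtain ⟨hvS, hvT⟩ := Finset.mem_sdiff.mp hv
        constructor
        · refine Finset.mem_sdiff.mpr ⟨(hclS v hvS).1, fun hXT => hvT ?_⟩
          rw [← hTX] at hXT
          obtain ⟨t, ht, hteq⟩ := Finset.mem_image.mp hXT
          rwa [← hXinj hteq]
        · refine Finset.mem_sdiff.mpr ⟨(hclS v hvS).2, fun hYT => hvT ?_⟩
          rw [← hTY] at hYT
          obtain ⟨t, ht, hteq⟩ := Finset.mem_image.mp hYT
          rwa [← hYinj hteq]
      exact ih S' hS'sub hclS' b hbS' hbimp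

end StrongCoreAux

open StrongCoreAux in
theorem stmt5 {N : Type} [Fintype N] (H : Market N) (X Y : N → N)
    (hX : H.InStrongCore X) (hY : H.InStrongCore Y) :
    ∀ a, ¬ H.pref a (X a) (Y a) ∧ ¬ H.pref a (Y a) (X a) := by
  classical
  have key : ∀ a, ¬ improver H X Y a := by
    intro a hup
    obtain ⟨v, hvimp, hvcyc⟩ :=
      exists_improver_on_cycle H X Y hX.1.1.injective hY.1.1.injective
        Finset.univ (fun v _ => ⟨Finset.mem_univ _, Finset.mem_univ _⟩)
        a (Finset.mem_univ a) hup
    obtain ⟨u₁, hvu, huv⟩ := (Relation.TransGen.head'_iff).mp hvcyc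
    obtain ⟨k, c, hk, hinj, hc0, hstep⟩ := cycle_of_loop H X Y v u₁ hvu huv
    have hcyc : Market.IsCycleIn H.E k c := by
      refine ⟨hk, hinj, fun i => ?_⟩
      rcases hstep i with ⟨heq, _⟩ | ⟨heq, _⟩
      · rw [heq]; exact hX.1.2 (c i)
      · rw [heq]; exact hY.1.2 (c i)
    rcases hvimp with hSX | hSY
    · -- X(v) ≻ Y(v): the cycle blocks Y
      apply hY.2
      refine ⟨k, c, hcyc, fun i => step_weakY H X Y (hstep i), 0, ?_⟩
      have h0 := hstep 0
      rw [hc0] at h0 ⊢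
      rcases h0 with ⟨heq, _⟩ | ⟨heq, hcon⟩
      · rw [heq]; exact hSX
      · exact absurd hSX hcon
    · -- Y(v) ≻ X(v): the cycle blocks X
      apply hX.2
      refine ⟨k, c, hcyc, fun i => step_weakX H X Y (hstep i), 0, ?_⟩
      have h0 := hstep 0
      rw [hc0] at h0 ⊢
      rcases h0 with ⟨heq, hcon⟩ | ⟨heq, _⟩
      · exact absurd hSY hcon
      · rw [heq]; exact hSY
  intro a
  exact ⟨fun h => key a (Or.inl h), fun h => key a (Or.inr h)⟩
end

section
/- There exists a housing market H with strict partial order preferences over four agents {a,b,c,d} such that: U (the undominated arcs) has a unique absorbing strongly connected component S = {a,b,c}; the submarket H|_S admits allocations contained in U; the submarket H|_{{d}} has an allocation in its strong core (the loop at d); and yet the strong core of H is empty. Hence the Quint–Wako conditions (a) and (b) are not sufficient for membership in the strong core under partial order preferences. -/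
namespace Market

variable {N : Type}

def ofTiers (tier : N → N → ℕ) (r : N → N → N → Prop) (r_irrefl : ∀ a b, ¬ r a b b)
    (r_trans : ∀ a b c d, r a b c → r a c d → r a b d) : Market N where
  pref a b c := tier a c < tier a b ∨ (tier a b = tier a c ∧ r a b c)
  irrefl a b := by rintro (h | ⟨-, h⟩) <;> [omega; exact r_irrefl a b h]
  asymm a b c := by
    rintro (h | ⟨h, hr⟩) (h' | ⟨h', hr'⟩) <;>
      first | omega | exact r_irrefl a b (r_trans a b c b hr hr')
  trans a b c d := by
    rintro (h | ⟨h, hr⟩) (h' | ⟨h', hr'⟩)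
    all_goals first | (left; omega) | exact Or.inr ⟨h.trans h', r_trans a b c d hr hr'⟩

instance {tier : N → N → ℕ} {r : N → N → N → Prop} [∀ a, DecidableRel (r a)] {hi ht}
    (a : N) : DecidableRel ((ofTiers tier r hi ht).pref a) :=
  fun _ _ => inferInstanceAs (Decidable (_ ∨ _))

section Decidable

variable (H : Market N) [∀ a, DecidableRel (H.pref a)]

instance (a b : N) : Decidable (H.acceptable a b) :=
  inferInstanceAs (Decidable (¬ H.pref a a b))

instance (e : N × N) : Decidable (e ∈ H.E) :=
  inferInstanceAs (Decidable (H.acceptable e.1 e.2))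

instance [Fintype N] (e : N × N) : Decidable (e ∈ H.undominated) :=
  inferInstanceAs (Decidable (_ ∧ ∀ b', ¬ H.pref e.1 e.1 b' → ¬ H.pref e.1 b' e.2))

end Decidable

variable (H : Market N)

theorem inStrongCoreOn_singleton_loop (x : N) : H.InStrongCoreOn {x} {(x, x)} := by
  refine ⟨⟨?_, ?_, ?_, ?_⟩, ?_⟩
  · intro e he
    rw [Set.mem_singleton_iff.1 he]
    exact H.irrefl x x
  · intro e he
    rw [Set.mem_singleton_iff.1 he]
    exact ⟨rfl, rfl⟩
  · intro a ha
    rw [Set.mem_singleton_iff.1 ha]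
    exact ⟨x, rfl, fun b hb => (Prod.ext_iff.1 hb).2⟩
  · intro b hb
    rw [Set.mem_singleton_iff.1 hb]
    exact ⟨x, rfl, fun a ha => (Prod.ext_iff.1 ha).1⟩
  · rintro ⟨k, c, -, hc, -, i, b, hb, hbetter⟩
    obtain ⟨hi, rfl⟩ := Prod.ext_iff.1 hb
    rw [show c i = b from hi, show c (i + 1) = b from hc (i + 1)] at hbetter
    exact H.irrefl b b hbetter

theorem isAllocationOn_graphRestrict (σ : Equiv.Perm N) {S : Set N}
    (hσS : ∀ a, σ a ∈ S ↔ a ∈ S) (hacc : ∀ a ∈ S, H.acceptable a (σ a)) :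
    H.IsAllocationOn S (graphRestrict σ S) := by
  refine ⟨?_, ?_, ?_, ?_⟩
  · rintro ⟨a, b⟩ ⟨ha, hb : b = σ a⟩
    exact hb ▸ hacc a ha
  · rintro ⟨a, b⟩ ⟨ha, hb : b = σ a⟩
    exact ⟨ha, hb ▸ (hσS a).2 ha⟩
  · intro a ha
    exact ⟨σ a, ⟨ha, rfl⟩, fun b hb => hb.2⟩
  · intro b hb
    refine ⟨σ.symm b, ⟨(hσS _).1 (by simpa using hb), (σ.apply_symm_apply b).symm⟩,
      fun a ha => σ.eq_symm_apply.2 ha.2.symm⟩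

theorem blocks_pair {X : N → N} {x y : N} (hxy : x ≠ y) (hx : H.acceptable x y)
    (hy : H.acceptable y x) (hx_better : H.pref x y (X x)) (hy_weak : ¬ H.pref y (X y) x) :
    H.Blocks X 2 ![x, y] := by
  refine ⟨⟨two_pos, ?_, ?_⟩, ?_, 0, hx_better⟩
  · intro i j h
    fin_cases i <;> fin_cases j <;> first | rfl | simp_all [eq_comm]
  · intro i
    fin_cases i
    exacts [hx, hy]
  · intro i
    fin_cases i
    exacts [H.asymm _ _ _ hx_better, hy_weak]

theorem blocks_triple {X : N → N} {x y z : N} (hxy : x ≠ y) (hxz : x ≠ z) (hyz : y ≠ z)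
    (hx : H.acceptable x y) (hy : H.acceptable y z) (hz : H.acceptable z x)
    (hx_better : H.pref x y (X x)) (hy_weak : ¬ H.pref y (X y) z)
    (hz_weak : ¬ H.pref z (X z) x) : H.Blocks X 3 ![x, y, z] := by
  refine ⟨⟨three_pos, ?_, ?_⟩, ?_, 0, hx_better⟩
  · intro i j h
    fin_cases i <;> fin_cases j <;> first | rfl | simp_all [eq_comm]
  · intro i
    fin_cases i
    exacts [hx, hy, hz]
  · intro i
    fin_cases i
    exacts [H.asymm _ _ _ hx_better, hy_weak, hz_weak]

end Market

theorem reach_mem_of_closed {N : Type} {A : Set (N × N)} {S : Set N}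
    (hS : ∀ e ∈ A, e.1 ∈ S → e.2 ∈ S) {u v : N} (huv : reach A u v) (hu : u ∈ S) :
    v ∈ S := by
  induction huv with
  | refl => exact hu
  | tail _ hvw ih => exact hS _ hvw ih

theorem isAbsorbing_iff_of_closed {N : Type} {A : Set (N × N)} {S : Set N} (hne : S.Nonempty)
    (hreach : ∀ u, ∀ v ∈ S, reach A u v) (hS : ∀ e ∈ A, e.1 ∈ S → e.2 ∈ S)
    (T : Set N) : IsAbsorbing A T ↔ T = S := by
  constructor
  · rintro ⟨⟨⟨t, ht⟩, hconn, -⟩, hT⟩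
    obtain ⟨s, hs⟩ := hne
    have hsT : s ∈ T := reach_mem_of_closed hT (hreach t s hs) ht
    ext x
    exact ⟨fun hx => reach_mem_of_closed hS (hconn s hsT x hx) hs,
      fun hx => reach_mem_of_closed hT (hreach t x hx) ht⟩
  · rintro rfl
    exact ⟨⟨hne, fun u _ v hv => hreach u v hv,
      fun u hu v huv _ => reach_mem_of_closed hS huv hu⟩, hS⟩

/- Agents `a, b, c, d` are `0, 1, 2, 3`. Each agent puts the acceptable houses other than its own
in tier 2, its own house in tier 1 and the unacceptable houses in tier 0; within tier 2, agents `a`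
and `b` rank `c` above `d`, and all other pairs are incomparable. -/
def exampleAcceptable : Fin 4 → Finset (Fin 4) := ![Finset.univ, Finset.univ, {0, 1, 2}, {2, 3}]

def exampleTier (x y : Fin 4) : ℕ :=
  if y = x then 1 else if y ∈ exampleAcceptable x then 2 else 0

def exampleTieBreak (x y z : Fin 4) : Prop := (x = 0 ∨ x = 1) ∧ y = 2 ∧ z = 3

instance (x : Fin 4) : DecidableRel (exampleTieBreak x) :=
  fun _ _ => inferInstanceAs (Decidable (_ ∧ _))

def exampleMarket : Market (Fin 4) :=
  Market.ofTiers exampleTier exampleTieBreak (by decide) (by decide)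

instance (x : Fin 4) : DecidableRel (exampleMarket.pref x) :=
  inferInstanceAs (DecidableRel ((Market.ofTiers exampleTier exampleTieBreak _ _).pref x))

theorem exampleMarket_undominated_snd_ne_three :
    ∀ e ∈ exampleMarket.undominated, e.2 ≠ 3 := by
  decide

theorem exampleMarket_undominated_path (u v : Fin 4) (hv : v ≠ 3) :
    u = v ∨ (u, v) ∈ exampleMarket.undominated ∨
      ((u, 2) ∈ exampleMarket.undominated ∧ (2, v) ∈ exampleMarket.undominated) := by
  revert u v; decide

theorem mem_zero_one_two_iff (x : Fin 4) : x ∈ ({0, 1, 2} : Set (Fin 4)) ↔ x ≠ 3 := by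
  fin_cases x <;> simp

theorem exampleMarket_isAbsorbing_iff (T : Set (Fin 4)) :
    IsAbsorbing exampleMarket.undominated T ↔ T = {0, 1, 2} := by
  refine isAbsorbing_iff_of_closed ⟨0, by simp⟩ (fun u v hv => ?_) (fun e he _ => ?_) T
  · rcases exampleMarket_undominated_path u v ((mem_zero_one_two_iff v).1 hv) with
      rfl | h | ⟨h₁, h₂⟩
    · exact .refl
    · exact .single h
    · exact .tail (.single h₁) h₂
  · exact (mem_zero_one_two_iff _).2 (exampleMarket_undominated_snd_ne_three e he)

/-- The trading cycle `a → b → c → a`. -/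
def exampleCycle : Equiv.Perm (Fin 4) := Equiv.swap 0 1 * Equiv.swap 1 2

theorem exampleCycle_undominated :
    ∀ a : Fin 4, a ≠ 3 → (a, exampleCycle a) ∈ exampleMarket.undominated := by
  decide

theorem exampleMarket_isAllocationOn_exampleCycle :
    exampleMarket.IsAllocationOn {0, 1, 2} (graphRestrict exampleCycle {0, 1, 2}) :=
  exampleMarket.isAllocationOn_graphRestrict exampleCycle
    (fun a => by simp only [mem_zero_one_two_iff]; revert a; decide)
    (fun a ha => (exampleCycle_undominated a ((mem_zero_one_two_iff a).1 ha)).1)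

theorem graphRestrict_exampleCycle_subset_undominated :
    graphRestrict exampleCycle {0, 1, 2} ⊆ exampleMarket.undominated := by
  rintro ⟨a, b⟩ ⟨ha, hb : b = exampleCycle a⟩
  exact hb ▸ exampleCycle_undominated a ((mem_zero_one_two_iff a).1 ha)

theorem exampleMarket_not_pref_above_zero_one :
    ∀ x z : Fin 4, x = 0 ∨ x = 1 → ¬ exampleMarket.pref 2 z x := by
  decide

theorem exampleMarket_eq_two_of_pref_above_three :
    ∀ x z : Fin 4, x = 0 ∨ x = 1 → exampleMarket.pref x z 3 → z = 2 := by
  decide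

theorem exampleMarket_blocks_pair {X : Fin 4 → Fin 4} {x : Fin 4} (hx : x = 0 ∨ x = 1)
    (hXx : X x = 3) : exampleMarket.Blocks X 2 ![x, 2] := by
  refine exampleMarket.blocks_pair ?_ ?_ ?_ (by rw [hXx]; rcases hx with rfl | rfl <;> decide)
    (exampleMarket_not_pref_above_zero_one x _ hx) <;> rcases hx with rfl | rfl <;> decide

theorem exampleMarket_blocks_triple {X : Fin 4 → Fin 4} {x : Fin 4} (hx : x = 0 ∨ x = 1)
    (hXx : X x ≠ 2) (hX3 : X 3 = 3) : exampleMarket.Blocks X 3 ![3, 2, x] := by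
  refine exampleMarket.blocks_triple ?_ ?_ ?_ ?_ ?_ ?_ (by rw [hX3]; decide)
    (exampleMarket_not_pref_above_zero_one x _ hx)
    (fun h => hXx (exampleMarket_eq_two_of_pref_above_three x _ hx h)) <;>
    rcases hx with rfl | rfl <;> decide

theorem exampleMarket_not_inStrongCore (X : Fin 4 → Fin 4) : ¬ exampleMarket.InStrongCore X := by
  rintro ⟨⟨⟨hinj, hsurj⟩, hacc⟩, hnb⟩
  apply hnb
  have hX3 : X 3 = 2 ∨ X 3 = 3 :=
    (by decide : ∀ y, exampleMarket.acceptable 3 y → y = 2 ∨ y = 3) _ (hacc 3)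
  rcases hX3 with hX3 | hX3
  · obtain ⟨x, hXx⟩ := hsurj 3
    have hx : x = 0 ∨ x = 1 := by
      have h2 : x ≠ 2 := by
        rintro rfl
        exact (by decide : ¬ exampleMarket.acceptable 2 3) (hXx ▸ hacc 2)
      have h3 : x ≠ 3 := by
        rintro rfl
        exact absurd (hX3.symm.trans hXx) (by decide)
      omega
    exact ⟨2, _, exampleMarket_blocks_pair hx hXx⟩
  · obtain ⟨x, hx, hXx⟩ : ∃ x : Fin 4, (x = 0 ∨ x = 1) ∧ X x ≠ 2 := by
      by_contra! h
      exact absurd (hinj ((h 0 (.inl rfl)).trans (h 1 (.inr rfl)).symm)) (by decide)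
    exact ⟨3, _, exampleMarket_blocks_triple hx hXx hX3⟩

theorem stmt9 : ∃ H : Market (Fin 4),
    (∀ T : Set (Fin 4), IsAbsorbing H.undominated T ↔ T = {0, 1, 2}) ∧
    (∃ X₁ : Set (Fin 4 × Fin 4), H.IsAllocationOn {0, 1, 2} X₁ ∧ X₁ ⊆ H.undominated) ∧
    H.InStrongCoreOn {3} {((3 : Fin 4), (3 : Fin 4))} ∧
    (∀ X : Fin 4 → Fin 4, ¬ H.InStrongCore X) :=
  ⟨exampleMarket, exampleMarket_isAbsorbing_iff,
    ⟨_, exampleMarket_isAllocationOn_exampleCycle,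
      graphRestrict_exampleCycle_subset_undominated⟩,
    exampleMarket.inStrongCoreOn_singleton_loop 3, exampleMarket_not_inStrongCore⟩
end

section
/- Let H be a housing market with strict partial order preferences, X an allocation, S ⊆ N, and suppose every arc of D^H leaving S is dominated by an arc of X ∩ (S × S). Then no blocking cycle for X contains an arc leaving S. -/
theorem stmt10 {N : Type} [Fintype N] (H : Market N) (X : N → N)
    (hX : H.IsAllocation X) (S : Set N)
    (hdom : ∀ a ∈ S, ∀ b, b ∉ S → (a, b) ∈ H.E →
      ∃ e ∈ graphRestrict X S, e.1 = a ∧ H.pref a e.2 b) :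
    ∀ (k : ℕ) (c : ZMod k → N), H.Blocks X k c →
      ∀ i, ¬ (c i ∈ S ∧ c (i + 1) ∉ S) := by
  intro k c hb i ⟨hiS, hnS⟩
  obtain ⟨e, ⟨heS, heX⟩, he1, hpref⟩ :=
    hdom (c i) hiS (c (i + 1)) hnS (hb.1.2.2 i)
  exact hb.2.1 i (by rwa [heX, he1] at hpref)
end
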